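/- arXiv:2109.12163 — 9 statements merged into one kernel-verified Lean document; each statement's English description precedes it below -/
import Mathlib

section
/- For every initial condition (x₀, y₀) ∈ ℝ² with |y₀| < 1, the curve t ↦ (x(t), y(t)) defined by x(t) = x₀ e^t and y(t) = y₀ / √((1 − y₀²) e^{2t} + y₀²) is defined for all t ∈ ℝ, satisfies |y(t)| < 1 for all t, satisfies the initial condition (x(0), y(0)) = (x₀, y₀), and solves the system of ODEs ẋ = x, ẏ = −y + y³. -/
/-! The equation `ẏ = −y + y³` is a Bernoulli equation: for `D = y₀² / y²` it becomes the linear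
equation `Ḋ = 2 (D − y₀²)`, whose solution with `D 0 = 1` is `D t = (1 − y₀²) e^{2t} + y₀²`.
When `y₀² < 1` this `D` stays above `y₀²`, which keeps `y = y₀ / √D` defined and inside `|y| < 1`. -/

open Real

lemma abs_div_sqrt_lt_one {a d : ℝ} (h : a ^ 2 < d) : |a / √d| < 1 := by
  have hd : 0 < √d := sqrt_pos.mpr ((sq_nonneg a).trans_lt h)
  rw [abs_div, abs_of_pos hd, div_lt_one hd, ← sqrt_sq_eq_abs]
  exact sqrt_lt_sqrt (sq_nonneg a) h

lemma hasDerivAt_div_sqrt_of_bernoulli {D : ℝ → ℝ} {c t : ℝ}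
    (hD : HasDerivAt D (2 * (D t - c ^ 2)) t) (hpos : 0 < D t) :
    HasDerivAt (fun s => c / √(D s)) (-(c / √(D t)) + (c / √(D t)) ^ 3) t := by
  have hs : 0 < √(D t) := sqrt_pos.mpr hpos
  refine ((hasDerivAt_const t c).fun_div (hD.sqrt hpos.ne') hs.ne').congr_deriv ?_
  field_simp
  rw [sq_sqrt hpos.le]
  ring

lemma lt_one_sub_sq_mul_exp_add_sq {c : ℝ} (hc : c ^ 2 < 1) (t : ℝ) :
    c ^ 2 < (1 - c ^ 2) * exp (2 * t) + c ^ 2 :=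
  lt_add_of_pos_left _ (mul_pos (sub_pos.mpr hc) (exp_pos _))

lemma hasDerivAt_one_sub_sq_mul_exp_add_sq (c t : ℝ) :
    HasDerivAt (fun s => (1 - c ^ 2) * exp (2 * s) + c ^ 2)
      (2 * ((1 - c ^ 2) * exp (2 * t) + c ^ 2 - c ^ 2)) t := by
  refine ((((hasDerivAt_id t).const_mul 2).exp).const_mul (1 - c ^ 2)).add_const (c ^ 2)
    |>.congr_deriv ?_
  simp only [id, mul_one]
  ring

/-- For every initial condition `(x₀, y₀)` with `|y₀| < 1`, the explicit curve
`x t = x₀ e^t`, `y t = y₀ / √((1 − y₀²) e^{2t} + y₀²)` is defined for all `t`,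
stays in `|y| < 1`, satisfies the initial condition at `t = 0`, and solves the
nonlinear saddle system `ẋ = x`, `ẏ = −y + y³`. -/
theorem ftle_keig_stmt0 (x₀ y₀ : ℝ) (h : |y₀| < 1) :
    let x : ℝ → ℝ := fun t => x₀ * Real.exp t
    let y : ℝ → ℝ := fun t => y₀ / Real.sqrt ((1 - y₀ ^ 2) * Real.exp (2 * t) + y₀ ^ 2)
    x 0 = x₀ ∧ y 0 = y₀ ∧
      ∀ t : ℝ, |y t| < 1 ∧ HasDerivAt x (x t) t ∧ HasDerivAt y (-(y t) + (y t) ^ 3) t := by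
  intro x y
  have hy₀ : y₀ ^ 2 < 1 := (sq_lt_one_iff_abs_lt_one y₀).mpr h
  refine ⟨by simp [x], by simp [y], fun t => ⟨?_, ?_, ?_⟩⟩
  · exact abs_div_sqrt_lt_one (lt_one_sub_sq_mul_exp_add_sq hy₀ t)
  · simpa [x] using (hasDerivAt_exp t).const_mul x₀
  · exact hasDerivAt_div_sqrt_of_bernoulli (hasDerivAt_one_sub_sq_mul_exp_add_sq y₀ t)
      ((sq_nonneg y₀).trans_lt (lt_one_sub_sq_mul_exp_add_sq hy₀ t))
end

section
/- For every y ∈ ℝ with |y| < 1, the function σ_t(y) = −(1/(2t)) · log( e^{4t} / ((1 − y²) e^{2t} + y²)³ ), defined for t ≠ 0, tends to 1 − 3y² as t → 0. In particular, the backward-time finite-time Lyapunov exponent of the nonlinear saddle converges, as the integration time tends to zero, to the negative of the attraction rate s₁(y) = −1 + 3y². -/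
open Topology Filter

/-!
Write `σ_t(y) = -(1/2) · φ(t)/t` with `φ(t) = log (e^{4t} / D(t)^3)` and
`D(t) = (1 - y²) e^{2t} + y²`. Since `D(0) = 1`, the argument of the logarithm is `1` at `t = 0`,
so `φ(0) = 0`, `φ` is differentiable at `0`, and `σ_t(y)` is `-1/2` times its difference
quotient; hence `σ_t(y) → -φ'(0)/2`, where `φ'(0) = 4 - 3 D'(0) = 4 - 6 (1 - y²)`.
-/

theorem tendsto_neg_inv_two_mul_mul_of_hasDerivAt {φ : ℝ → ℝ} {φ' : ℝ}
    (hφ : HasDerivAt φ φ' 0) (hφ0 : φ 0 = 0) :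
    Tendsto (fun t : ℝ => -(1 / (2 * t)) * φ t) (𝓝[≠] 0) (𝓝 (-(φ' / 2))) := by
  have hslope := (hasDerivAt_iff_tendsto_slope_zero.1 hφ).const_mul (-(1 / 2 : ℝ))
  rw [show -(1 / 2 : ℝ) * φ' = -(φ' / 2) by ring] at hslope
  refine hslope.congr fun t => ?_
  simp only [zero_add, hφ0, sub_zero, smul_eq_mul]
  ring

theorem hasDerivAt_log_exp_div_cube (y : ℝ) :
    HasDerivAt
      (fun t : ℝ => Real.log (Real.exp (4 * t) / ((1 - y ^ 2) * Real.exp (2 * t) + y ^ 2) ^ 3))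
      (-2 + 6 * y ^ 2) 0 := by
  have hD : HasDerivAt (fun t : ℝ => (1 - y ^ 2) * Real.exp (2 * t) + y ^ 2)
      (2 * (1 - y ^ 2)) 0 := by
    have := (((hasDerivAt_id (0 : ℝ)).const_mul 2).exp.const_mul (1 - y ^ 2)).add_const (y ^ 2)
    simpa [mul_comm] using this
  have hnum : HasDerivAt (fun t : ℝ => Real.exp (4 * t)) 4 0 := by
    simpa using ((hasDerivAt_id (0 : ℝ)).const_mul 4).exp
  have := (hnum.fun_div (hD.fun_pow 3) (by simp)).log (by simp)
  convert this using 1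
  norm_num
  ring

theorem ftle_keig_stmt2_general (y : ℝ) :
    Tendsto
      (fun t : ℝ =>
        -(1 / (2 * t)) *
          Real.log (Real.exp (4 * t) / ((1 - y ^ 2) * Real.exp (2 * t) + y ^ 2) ^ 3))
      (𝓝[≠] (0 : ℝ)) (𝓝 (1 - 3 * y ^ 2)) ∧
    Tendsto
      (fun t : ℝ =>
        -(1 / (2 * t)) *
          Real.log (Real.exp (4 * t) / ((1 - y ^ 2) * Real.exp (2 * t) + y ^ 2) ^ 3))
      (𝓝[<] (0 : ℝ)) (𝓝 (-(-1 + 3 * y ^ 2))) := by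
  have hlim := tendsto_neg_inv_two_mul_mul_of_hasDerivAt (hasDerivAt_log_exp_div_cube y)
    (by simp)
  rw [show -((-2 + 6 * y ^ 2) / 2) = 1 - 3 * y ^ 2 by ring] at hlim
  refine ⟨hlim, ?_⟩
  rw [show -(-1 + 3 * y ^ 2) = 1 - 3 * y ^ 2 by ring]
  exact hlim.mono_left (nhdsWithin_mono _ fun _ ht => ne_of_lt ht)

/-- For `|y| < 1`, the backward-time FTLE of the nonlinear saddle,
`σ_t(y) = −(1/(2t)) log( e^{4t} / ((1 − y²) e^{2t} + y²)³ )` (defined for `t ≠ 0`),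
tends to `1 − 3y²` as `t → 0`; in particular, along `t < 0` it converges to the
negative of the attraction rate `s₁(y) = −1 + 3y²`. -/
theorem ftle_keig_stmt2 (y : ℝ) (h : |y| < 1) :
    Tendsto
      (fun t : ℝ =>
        -(1 / (2 * t)) *
          Real.log (Real.exp (4 * t) / ((1 - y ^ 2) * Real.exp (2 * t) + y ^ 2) ^ 3))
      (𝓝[≠] (0 : ℝ)) (𝓝 (1 - 3 * y ^ 2)) ∧
    Tendsto
      (fun t : ℝ =>
        -(1 / (2 * t)) *
          Real.log (Real.exp (4 * t) / ((1 - y ^ 2) * Real.exp (2 * t) + y ^ 2) ^ 3))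
      (𝓝[<] (0 : ℝ)) (𝓝 (-(-1 + 3 * y ^ 2))) :=
  ftle_keig_stmt2_general y
end

section
/- Let v(x,y) = (x, −y + y³) and g(x,y) = −1 + 3y². Then for all (x,y) ∈ ℝ², v(x,y) · ∇g(x,y) = 6y² g(x,y) − 12y⁴, and there exists no λ ∈ ℝ such that v(x,y) · ∇g(x,y) = λ g(x,y) for all (x,y) with |y| < 1. In other words, the instantaneous attraction rate field s₁(x,y) = −1 + 3y² of the nonlinear saddle is not a Koopman eigenfunction. -/
/-! At `y = 0` we have `v · ∇s₁ = 0` while `s₁ = −1`, forcing `λ = 0`; but at `y = 1/2`,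
`v · ∇s₁ = 6y² s₁ − 12y⁴ = −3/8 ≠ 0`. -/

lemma deriv_neg_one_add_three_mul_sq (y : ℝ) :
    deriv (fun y' : ℝ => (-1 : ℝ) + 3 * y' ^ 2) y = 6 * y :=
  (((hasDerivAt_pow 2 y).const_mul 3).const_add (-1)).deriv.trans (by norm_num; ring)

lemma saddle_lieDeriv_attractionRate (x y : ℝ) :
    x * deriv (fun _ : ℝ => (-1 : ℝ) + 3 * y ^ 2) x
        + (-y + y ^ 3) * deriv (fun y' : ℝ => (-1 : ℝ) + 3 * y' ^ 2) y
      = 6 * y ^ 2 * (-1 + 3 * y ^ 2) - 12 * y ^ 4 := by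
  rw [deriv_const, deriv_neg_one_add_three_mul_sq]
  ring

/-- For the nonlinear saddle `v(x,y) = (x, −y + y³)` and `g(x,y) = −1 + 3y²`, we have
`v · ∇g = 6y² g − 12y⁴` everywhere, and there is no real `λ` with `v · ∇g = λ g` on
`{|y| < 1}`; i.e., the attraction rate field `s₁ = −1 + 3y²` is not a Koopman
eigenfunction. -/
theorem ftle_keig_stmt3 :
    (∀ x y : ℝ,
      x * deriv (fun _ : ℝ => (-1 : ℝ) + 3 * y ^ 2) x
        + (-y + y ^ 3) * deriv (fun y' : ℝ => (-1 : ℝ) + 3 * y' ^ 2) y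
      = 6 * y ^ 2 * (-1 + 3 * y ^ 2) - 12 * y ^ 4) ∧
    ¬ ∃ l : ℝ, ∀ x y : ℝ, |y| < 1 →
      x * deriv (fun _ : ℝ => (-1 : ℝ) + 3 * y ^ 2) x
        + (-y + y ^ 3) * deriv (fun y' : ℝ => (-1 : ℝ) + 3 * y' ^ 2) y
      = l * (-1 + 3 * y ^ 2) := by
  refine ⟨saddle_lieDeriv_attractionRate, ?_⟩
  rintro ⟨l, hl⟩
  have hl_zero : l = 0 := by
    have h := hl 0 0 (by norm_num)
    rw [saddle_lieDeriv_attractionRate] at h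
    linarith
  have h := hl 0 (1 / 2) (by norm_num [abs_of_pos])
  rw [saddle_lieDeriv_attractionRate, hl_zero] at h
  norm_num at h
end

section
/- Let λ ∈ ℝ and let h : ℝ → ℝ be differentiable. Define φ(x,y) = h( x · √(3y²/(1 − y²)) ) · (3y²/(1 − y²))^{−λ/2} on the domain U = {(x,y) ∈ ℝ² : 0 < |y| < 1}. Then for all (x,y) ∈ U, x · ∂φ/∂x (x,y) + (−y + y³) · ∂φ/∂y (x,y) = λ φ(x,y); that is, φ satisfies the Koopman eigenfunction PDE with eigenvalue λ for the nonlinear saddle vector field. -/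
/-!
The function `g y = 3y²/(1 - y²)` satisfies `(-y + y³) g'(y) = -2 g(y)`: it is a Koopman
eigenfunction of the saddle with eigenvalue `-2`, independent of `x`. Hence `g ^ (-λ/2)` has
eigenvalue `λ`, while `x √g` (with `x` of eigenvalue `1`) is invariant, and so is `h (x √g)`.
-/

open Real

theorem hasDerivAt_sqrt_mul_rpow {h g : ℝ → ℝ} {g' x y : ℝ} (p : ℝ)
    (hh : DifferentiableAt ℝ h (x * √(g y))) (hg : HasDerivAt g g' y) (hg0 : 0 < g y) :
    HasDerivAt (fun y' => h (x * √(g y')) * g y' ^ p)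
      (deriv h (x * √(g y)) * (x * (g' / (2 * √(g y)))) * g y ^ p
        + h (x * √(g y)) * (g' * p * g y ^ (p - 1))) y := by
  have hsqrt : HasDerivAt (fun y' => x * √(g y')) (x * (g' / (2 * √(g y)))) y :=
    (hg.sqrt hg0.ne').const_mul x
  exact (hh.hasDerivAt.comp y hsqrt).mul (hg.rpow_const (Or.inl hg0.ne'))

/-- Here `v` plays the role of the vertical velocity at `y`: the hypothesis `v * g' = -2 * g y`
says that `g` is an eigenfunction with eigenvalue `-2` of the field `(x, v)`. -/
theorem koopman_eq_of_sqrt_mul_rpow {h g : ℝ → ℝ} {g' v x y : ℝ} (l : ℝ)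
    (hh : DifferentiableAt ℝ h (x * √(g y))) (hg : HasDerivAt g g' y) (hg0 : 0 < g y)
    (hv : v * g' = -2 * g y) :
    x * deriv (fun x' => h (x' * √(g y)) * g y ^ (-(l / 2))) x
      + v * deriv (fun y' => h (x * √(g y')) * g y' ^ (-(l / 2))) y
      = l * (h (x * √(g y)) * g y ^ (-(l / 2))) := by
  have hx : HasDerivAt (fun x' => h (x' * √(g y)) * g y ^ (-(l / 2)))
      (deriv h (x * √(g y)) * √(g y) * g y ^ (-(l / 2))) x :=
    (hh.hasDerivAt.comp x (hasDerivAt_mul_const _)).mul_const _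
  rw [hx.deriv, (hasDerivAt_sqrt_mul_rpow (-(l / 2)) hh hg hg0).deriv]
  set s := √(g y)
  have hgs : g y / s = s := by
    rw [div_eq_iff (sqrt_pos.mpr hg0).ne', mul_self_sqrt hg0.le]
  have hrpow : g y ^ (-(l / 2) - 1) * g y = g y ^ (-(l / 2)) := by
    rw [← rpow_add_one hg0.ne', sub_add_cancel]
  set D := deriv h (x * s)
  set H := h (x * s)
  set c := g y ^ (-(l / 2))
  linear_combination (D * x * c / (2 * s) - H * (l / 2) * g y ^ (-(l / 2) - 1)) * hv
    - D * x * c * hgs + l * H * hrpow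

theorem hasDerivAt_three_mul_sq_div_one_sub_sq {y : ℝ} (hy : 1 - y ^ 2 ≠ 0) :
    HasDerivAt (fun y' => 3 * y' ^ 2 / (1 - y' ^ 2)) (6 * y / (1 - y ^ 2) ^ 2) y := by
  have hnum : HasDerivAt (fun y' => 3 * y' ^ 2) (3 * (2 * y)) y := by
    simpa using (hasDerivAt_pow 2 y).const_mul 3
  have hden : HasDerivAt (fun y' => 1 - y' ^ 2) (-(2 * y)) y := by
    simpa using (hasDerivAt_pow 2 y).const_sub 1
  exact (hnum.fun_div hden hy).congr_deriv (by ring)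

/-- For any `λ ∈ ℝ` and differentiable `h : ℝ → ℝ`, the function
`φ(x,y) = h(x √(3y²/(1 − y²))) · (3y²/(1 − y²))^{−λ/2}` satisfies the Koopman
eigenfunction PDE `x ∂φ/∂x + (−y + y³) ∂φ/∂y = λ φ` on `{0 < |y| < 1}` for the
nonlinear saddle vector field. -/
theorem ftle_keig_stmt4 (l : ℝ) (h : ℝ → ℝ) (hd : Differentiable ℝ h) :
    ∀ x y : ℝ, 0 < |y| → |y| < 1 →
      x * deriv (fun x' : ℝ =>
            h (x' * Real.sqrt (3 * y ^ 2 / (1 - y ^ 2))) *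
              (3 * y ^ 2 / (1 - y ^ 2)) ^ (-(l / 2))) x
        + (-y + y ^ 3) * deriv (fun y' : ℝ =>
            h (x * Real.sqrt (3 * y' ^ 2 / (1 - y' ^ 2))) *
              (3 * y' ^ 2 / (1 - y' ^ 2)) ^ (-(l / 2))) y
      = l * (h (x * Real.sqrt (3 * y ^ 2 / (1 - y ^ 2))) *
              (3 * y ^ 2 / (1 - y ^ 2)) ^ (-(l / 2))) := by
  intro x y hy0 hy1
  have hden : 0 < 1 - y ^ 2 := by nlinarith [sq_abs y, abs_nonneg y]
  have hg0 : 0 < 3 * y ^ 2 / (1 - y ^ 2) := div_pos (by positivity [abs_pos.mp hy0]) hden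
  have hsaddle : (-y + y ^ 3) * (6 * y / (1 - y ^ 2) ^ 2) = -2 * (3 * y ^ 2 / (1 - y ^ 2)) := by
    field_simp
    ring
  exact koopman_eq_of_sqrt_mul_rpow (g := fun y' => 3 * y' ^ 2 / (1 - y' ^ 2)) l (hd _)
    (hasDerivAt_three_mul_sq_div_one_sub_sq hden.ne') hg0 hsaddle
end

section
/- The function s(x,y) = x · √(3y²/(1 − y²)) satisfies x · ∂s/∂x (x,y) + (−y + y³) · ∂s/∂y (x,y) = 0 for all (x,y) with 0 < |y| < 1; that is, s is a first integral of the nonlinear saddle vector field (equivalently, a Koopman eigenfunction with eigenvalue 0). -/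
/-! With `g(y) = 3y²/(1 − y²)` one has `(−y + y³) g'(y) = −2 g(y)`, so `g` is a Koopman
eigenfunction of the vertical part of the saddle with eigenvalue `−2`, and `√g` one with
eigenvalue `−1`. The factor `x` has eigenvalue `1` under the horizontal part, so the
product `x √g` has eigenvalue `1 + (−1) = 0`. -/

open Real

/-- Square roots halve Koopman eigenvalues. -/
theorem mul_deriv_sqrt_of_hasDerivAt {f : ℝ → ℝ} {f' v c y : ℝ} (hf : HasDerivAt f f' y)
    (hpos : 0 < f y) (heig : v * f' = c * f y) :
    v * deriv (fun t => √(f t)) y = c / 2 * √(f y) := by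
  have hsqrt : 0 < √(f y) := sqrt_pos.mpr hpos
  rw [(hf.sqrt hpos.ne').deriv, mul_div_assoc', heig]
  field_simp
  rw [sq_sqrt hpos.le]

theorem hasDerivAt_saddle_ratio {y : ℝ} (hy : 1 - y ^ 2 ≠ 0) :
    HasDerivAt (fun t : ℝ => 3 * t ^ 2 / (1 - t ^ 2)) (6 * y / (1 - y ^ 2) ^ 2) y := by
  have hnum : HasDerivAt (fun t : ℝ => 3 * t ^ 2) (6 * y) y :=
    ((hasDerivAt_pow 2 y).const_mul 3).congr_deriv (by norm_num; ring)
  have hden : HasDerivAt (fun t : ℝ => 1 - t ^ 2) (-(2 * y)) y :=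
    ((hasDerivAt_pow 2 y).const_sub 1).congr_deriv (by norm_num)
  exact (hnum.div hden hy).congr_deriv (by ring)

theorem saddle_vertical_mul_ratio_deriv {y : ℝ} (hy : 1 - y ^ 2 ≠ 0) :
    (-y + y ^ 3) * (6 * y / (1 - y ^ 2) ^ 2) = -2 * (3 * y ^ 2 / (1 - y ^ 2)) := by
  field_simp
  ring

/-- The function `s(x,y) = x √(3y²/(1 − y²))` satisfies
`x ∂s/∂x + (−y + y³) ∂s/∂y = 0` on `{0 < |y| < 1}`; i.e., it is a first integral of
the nonlinear saddle vector field (a Koopman eigenfunction with eigenvalue `0`). -/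
theorem ftle_keig_stmt5 :
    ∀ x y : ℝ, 0 < |y| → |y| < 1 →
      x * deriv (fun x' : ℝ => x' * Real.sqrt (3 * y ^ 2 / (1 - y ^ 2))) x
        + (-y + y ^ 3) * deriv (fun y' : ℝ => x * Real.sqrt (3 * y' ^ 2 / (1 - y' ^ 2))) y
      = 0 := by
  intro x y hy0 hy1
  have hy2 : 0 < 1 - y ^ 2 := by nlinarith [sq_abs y]
  have hy_sq : 0 < y ^ 2 := by simpa [sq_abs] using pow_pos hy0 2
  have hsqrt := mul_deriv_sqrt_of_hasDerivAt (hasDerivAt_saddle_ratio hy2.ne')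
    (by positivity) (saddle_vertical_mul_ratio_deriv hy2.ne')
  simp only [deriv_mul_const_field', deriv_id'', deriv_const_mul_field']
  linear_combination x * hsqrt
end

section
/- For each integer k ≥ 1 define φ_{−2k}(x,y) = (−1/3)^{k−1} · (3y²/(1 − y²))^k on {(x,y) : |y| < 1}. Then (i) each φ_{−2k} satisfies x · ∂φ_{−2k}/∂x + (−y + y³) · ∂φ_{−2k}/∂y = −2k · φ_{−2k}, i.e., φ_{−2k} is a Koopman eigenfunction of the nonlinear saddle with eigenvalue −2k; and (ii) for all (x,y) with y² < 1/2, the series Σ_{k=1}^∞ φ_{−2k}(x,y) converges and equals 3y². Consequently, on {y² < 1/2} the attraction rate field s₁(x,y) = −1 + 3y² equals the sum Σ_{k=0}^∞ φ_{−2k}(x,y) of Koopman eigenfunctions, where φ₀ ≡ −1 is a Koopman eigenfunction with eigenvalue 0. -/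
/-!
All `φ_{−2k}` are multiples of powers of `u = φ_{−2} = 3y²/(1 − y²)`. Along the saddle flow
`ẏ = −y(1 − y²)` one has `u̇ = −2u`, so `c uᵏ` is an eigenfunction with eigenvalue `−2k` by the
chain rule. The series `Σ_{k≥1} φ_{−2k} = u Σ (−u/3)ᵏ` is geometric with ratio `−y²/(1 − y²)`,
which is smaller than `1` in absolute value exactly when `y² < 1/2`, and its sum
`u / (1 + u/3) = 3y²`.
-/

/-- The family of Koopman eigenfunctions `φ_{−2k}(x,y) = (−1/3)^{k−1} (3y²/(1 − y²))^k`
for `k ≥ 1`, together with `φ₀ ≡ −1`. -/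
noncomputable def ftleKeigPhi (k : ℕ) (_x y : ℝ) : ℝ :=
  if k = 0 then -1 else (-1 / 3 : ℝ) ^ (k - 1) * (3 * y ^ 2 / (1 - y ^ 2)) ^ k

noncomputable def saddleU (y : ℝ) : ℝ := 3 * y ^ 2 / (1 - y ^ 2)

theorem ftleKeigPhi_succ (k : ℕ) (x y : ℝ) :
    ftleKeigPhi (k + 1) x y = (-1 / 3) ^ k * saddleU y ^ (k + 1) := by
  simp [ftleKeigPhi, saddleU]

theorem deriv_ftleKeigPhi_fst (k : ℕ) (x y : ℝ) :
    deriv (fun x' : ℝ => ftleKeigPhi k x' y) x = 0 :=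
  deriv_const x (ftleKeigPhi k 0 y)

theorem hasDerivAt_saddleU {y : ℝ} (hy : 1 - y ^ 2 ≠ 0) :
    HasDerivAt saddleU (6 * y / (1 - y ^ 2) ^ 2) y := by
  have hnum : HasDerivAt (fun t : ℝ => 3 * t ^ 2) (6 * y) y := by
    simpa using ((hasDerivAt_pow 2 y).const_mul (3 : ℝ)).congr_deriv (by ring)
  have hden : HasDerivAt (fun t : ℝ => 1 - t ^ 2) (-(2 * y)) y := by
    simpa using ((hasDerivAt_pow 2 y).const_sub (1 : ℝ)).congr_deriv (by ring)
  refine (hnum.div hden hy).congr_deriv ?_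
  field_simp
  ring

theorem saddleU_eigen {y : ℝ} (hy : 1 - y ^ 2 ≠ 0) :
    (-y + y ^ 3) * (6 * y / (1 - y ^ 2) ^ 2) = -2 * saddleU y := by
  unfold saddleU
  field_simp
  ring

theorem deriv_const_mul_pow_of_eigen {g : ℝ → ℝ} {g' v μ y : ℝ} (hg : HasDerivAt g g' y)
    (heig : v * g' = μ * g y) (c : ℝ) (k : ℕ) :
    v * deriv (fun t => c * g t ^ k) y = (k * μ) * (c * g y ^ k) := by
  rw [((hg.fun_pow k).const_mul c).deriv]
  cases k with
  | zero => simp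
  | succ k =>
    push_cast
    rw [pow_succ]
    linear_combination (c * (k + 1) * g y ^ k) * heig

theorem ftleKeigPhi_eigen {k : ℕ} (hk : 1 ≤ k) (x : ℝ) {y : ℝ} (hy : |y| < 1) :
    x * deriv (fun x' : ℝ => ftleKeigPhi k x' y) x
      + (-y + y ^ 3) * deriv (fun y' : ℝ => ftleKeigPhi k x y') y
      = (-2 * (k : ℝ)) * ftleKeigPhi k x y := by
  obtain ⟨m, rfl⟩ : ∃ m, k = m + 1 := ⟨k - 1, by omega⟩
  have hy2 : 1 - y ^ 2 ≠ 0 := by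
    have : y ^ 2 < 1 := by simpa using sq_lt_one_iff_abs_lt_one y |>.mpr hy
    linarith
  have hfun : (fun y' : ℝ => ftleKeigPhi (m + 1) x y')
      = fun y' => (-1 / 3) ^ m * saddleU y' ^ (m + 1) := funext (ftleKeigPhi_succ m x)
  rw [deriv_ftleKeigPhi_fst, hfun,
    deriv_const_mul_pow_of_eigen (hasDerivAt_saddleU hy2) (saddleU_eigen hy2),
    ftleKeigPhi_succ]
  ring

theorem hasSum_ftleKeigPhi_succ (x : ℝ) {y : ℝ} (hy : y ^ 2 < 1 / 2) :
    HasSum (fun k : ℕ => ftleKeigPhi (k + 1) x y) (3 * y ^ 2) := by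
  have hden : 0 < 1 - y ^ 2 := by linarith
  have hratio : |-(saddleU y / 3)| < 1 := by
    rw [abs_neg, abs_of_nonneg (by unfold saddleU; positivity), div_lt_one (by norm_num),
      saddleU, div_lt_iff₀ hden]
    linarith
  have hsum : saddleU y * (1 - -(saddleU y / 3))⁻¹ = 3 * y ^ 2 := by
    unfold saddleU
    field_simp
    ring
  rw [← hsum]
  refine ((hasSum_geometric_of_abs_lt_one hratio).mul_left (saddleU y)).congr_fun fun k => ?_
  rw [ftleKeigPhi_succ, show -(saddleU y / 3) = -1 / 3 * saddleU y by ring, mul_pow]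
  ring

/-- (i) Each `φ_{−2k}` (`k ≥ 1`) is a Koopman eigenfunction of the nonlinear saddle
with eigenvalue `−2k`; `φ₀ ≡ −1` is a Koopman eigenfunction with eigenvalue `0`;
(ii) for `y² < 1/2` the series `Σ_{k≥1} φ_{−2k}` converges to `3y²`; consequently the
attraction rate `s₁(x,y) = −1 + 3y²` equals `Σ_{k≥0} φ_{−2k}(x,y)` there. -/
theorem ftle_keig_stmt7 :
    (∀ k : ℕ, 1 ≤ k → ∀ x y : ℝ, |y| < 1 →
      x * deriv (fun x' : ℝ => ftleKeigPhi k x' y) x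
        + (-y + y ^ 3) * deriv (fun y' : ℝ => ftleKeigPhi k x y') y
      = (-2 * (k : ℝ)) * ftleKeigPhi k x y) ∧
    (∀ x y : ℝ, |y| < 1 →
      x * deriv (fun x' : ℝ => ftleKeigPhi 0 x' y) x
        + (-y + y ^ 3) * deriv (fun y' : ℝ => ftleKeigPhi 0 x y') y
      = 0 * ftleKeigPhi 0 x y) ∧
    (∀ x y : ℝ, y ^ 2 < 1 / 2 →
      HasSum (fun k : ℕ => ftleKeigPhi (k + 1) x y) (3 * y ^ 2)) ∧
    (∀ x y : ℝ, y ^ 2 < 1 / 2 →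
      HasSum (fun k : ℕ => ftleKeigPhi k x y) (-1 + 3 * y ^ 2)) := by
  refine ⟨fun k hk x y hy => ftleKeigPhi_eigen hk x hy, fun x y _ => ?_,
    fun x y hy => hasSum_ftleKeigPhi_succ x hy, fun x y hy => ?_⟩
  · have hconst : (fun y' : ℝ => ftleKeigPhi 0 x y') = fun _ => -1 := rfl
    rw [deriv_ftleKeigPhi_fst, hconst, deriv_const]
    ring
  · refine (hasSum_nat_add_iff' 1).mp ?_
    simpa [ftleKeigPhi] using hasSum_ftleKeigPhi_succ x hy
end

section
/- Let n be a natural number, λ ∈ ℝ, and define φ_{n,λ}(x,y) = xⁿ · (3y²/(1 − y²))^{(n−λ)/2} on U = {(x,y) ∈ ℝ² : 0 < |y| < 1}. Then φ_{n,λ} satisfies x · ∂φ_{n,λ}/∂x + (−y + y³) · ∂φ_{n,λ}/∂y = λ φ_{n,λ} on U; that is, φ_{n,λ} is a Koopman eigenfunction of the nonlinear saddle vector field with eigenvalue λ. In particular, xⁿ is a Koopman eigenfunction with eigenvalue n. -/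
/-!
Both factors of `φ_{n,λ}` are eigenfunctions of the one-dimensional components of the
saddle: `x ∂ₓ xⁿ = n xⁿ` (Euler), and `g(y) = 3y²/(1 − y²)` satisfies `(−y + y³) g' = −2 g`,
so `(−y + y³) ∂_y g^α = −2α g^α`. A product of eigenfunctions in separate variables is an
eigenfunction with the sum of the eigenvalues, here `n − 2 · (n − λ)/2 = λ`.
-/

theorem mul_deriv_pow {𝕜 : Type*} [NontriviallyNormedField 𝕜] (n : ℕ) (x : 𝕜) :
    x * deriv (fun x => x ^ n) x = n * x ^ n := by
  rw [deriv_pow_field]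
  cases n with
  | zero => simp
  | succ m => rw [pow_succ]; push_cast; ring

theorem mul_deriv_mul_add_mul_deriv_mul {𝕜 : Type*} [NontriviallyNormedField 𝕜]
    {f h : 𝕜 → 𝕜} {a b x y μ ν : 𝕜}
    (hf : a * deriv f x = μ * f x) (hh : b * deriv h y = ν * h y) :
    a * deriv (fun x' => f x' * h y) x + b * deriv (fun y' => f x * h y') y
      = (μ + ν) * (f x * h y) := by
  rw [deriv_mul_const_field', deriv_const_mul_field']
  linear_combination h y * hf + f x * hh

theorem mul_deriv_rpow_const {g : ℝ → ℝ} {g' c k y : ℝ} (α : ℝ)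
    (hg : HasDerivAt g g' y) (hy : g y ≠ 0) (hc : c * g' = k * g y) :
    c * deriv (fun t => g t ^ α) y = α * k * g y ^ α := by
  rw [(hg.rpow_const (Or.inl hy)).deriv, Real.rpow_sub_one hy]
  field_simp
  linear_combination α * g y ^ α * hc

theorem hasDerivAt_mul_sq_div_one_sub_sq (c : ℝ) {y : ℝ} (hy : 1 - y ^ 2 ≠ 0) :
    HasDerivAt (fun t => c * t ^ 2 / (1 - t ^ 2)) (2 * c * y / (1 - y ^ 2) ^ 2) y := by
  have hnum : HasDerivAt (fun t => c * t ^ 2) (c * (2 * y)) y := by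
    simpa using (hasDerivAt_pow 2 y).const_mul c
  have hden : HasDerivAt (fun t => 1 - t ^ 2) (-(2 * y)) y := by
    simpa using (hasDerivAt_pow 2 y).const_sub 1
  refine (hnum.div hden hy).congr_deriv ?_
  ring

/-- For `n : ℕ` and `λ ∈ ℝ`, the function `φ_{n,λ}(x,y) = xⁿ (3y²/(1 − y²))^{(n−λ)/2}`
satisfies the Koopman eigenfunction PDE with eigenvalue `λ` for the nonlinear saddle on
`{0 < |y| < 1}`; in particular `xⁿ` is a Koopman eigenfunction with eigenvalue `n`. -/
theorem ftle_keig_stmt8 (n : ℕ) (l : ℝ) :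
    (∀ x y : ℝ, 0 < |y| → |y| < 1 →
      x * deriv (fun x' : ℝ =>
            x' ^ n * (3 * y ^ 2 / (1 - y ^ 2)) ^ (((n : ℝ) - l) / 2)) x
        + (-y + y ^ 3) * deriv (fun y' : ℝ =>
            x ^ n * (3 * y' ^ 2 / (1 - y' ^ 2)) ^ (((n : ℝ) - l) / 2)) y
      = l * (x ^ n * (3 * y ^ 2 / (1 - y ^ 2)) ^ (((n : ℝ) - l) / 2))) ∧
    (∀ x y : ℝ, 0 < |y| → |y| < 1 →
      x * deriv (fun x' : ℝ => x' ^ n) x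
        + (-y + y ^ 3) * deriv (fun _ : ℝ => x ^ n) y
      = (n : ℝ) * x ^ n) := by
  refine ⟨fun x y hy0 hy1 => ?_, fun x y _ _ => ?_⟩
  · have hy : y ≠ 0 := abs_pos.mp hy0
    have hy2 : 1 - y ^ 2 ≠ 0 := by nlinarith [sq_abs y, abs_nonneg y]
    have hflow :
        (-y + y ^ 3) * (2 * 3 * y / (1 - y ^ 2) ^ 2) = -2 * (3 * y ^ 2 / (1 - y ^ 2)) := by
      field_simp
      ring
    have hg := mul_deriv_rpow_const (((n : ℝ) - l) / 2) (hasDerivAt_mul_sq_div_one_sub_sq 3 hy2)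
      (div_ne_zero (by positivity) hy2) hflow
    convert mul_deriv_mul_add_mul_deriv_mul (mul_deriv_pow n x) hg using 2
    ring
  · rw [mul_deriv_pow, deriv_const, mul_zero, add_zero]
end

section
/- Let λ, c, a₀₀ ∈ ℝ and k ∈ ℝ with k ≠ 0, and define the cubic planar vector field P(x,y) = a₀₀ + (λ − c/(6k²)) x + (λ/2 − c/(6k²)) y − (c/(2k)) (x + y)² − (c/2) (x + y)³, Q(x,y) = (λ/(6k) − a₀₀) − (λ/2 − c/(6k²)) x + (c/(6k²)) y + (c/(2k)) (x + y)² + (c/2) (x + y)³. Then the function s₁(x,y) = c/(6k²) + (c/k)(x + y) + (3/2) c (x + y)² = ∂Q/∂y satisfies P ∂s₁/∂x + Q ∂s₁/∂y = λ s₁ for all (x,y) ∈ ℝ², i.e., the attraction rate s₁ is a Koopman eigenfunction of this vector field with eigenvalue λ. -/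
/-!
Both `P + Q` and `s₁` depend on `(x, y)` only through `s = x + y`: with `s₀ = -1/(3k)` one has
`P + Q = λ (s - s₀) / 2` and `s₁ = (3c/2) (s - s₀)²`. So `P ∂ₓs₁ + Q ∂ᵧs₁ = (P + Q) s₁'(s)`, and
Euler's identity `(s - s₀) s₁'(s) = 2 s₁(s)` for this homogeneous quadratic in `s - s₀` gives `λ s₁`.
-/

lemma mul_deriv_comp_add_const_add_mul_deriv_comp_const_add {𝕜 : Type*}
    [NontriviallyNormedField 𝕜] (g : 𝕜 → 𝕜) (p q x y : 𝕜) :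
    p * deriv (fun x' => g (x' + y)) x + q * deriv (fun y' => g (x + y')) y
      = (p + q) * deriv g (x + y) := by
  rw [deriv_comp_add_const, deriv_comp_const_add, add_mul]

noncomputable def attractionRate (c k s : ℝ) : ℝ :=
  c / (6 * k ^ 2) + (c / k) * s + (3 / 2) * c * s ^ 2

lemma hasDerivAt_attractionRate (c k s : ℝ) :
    HasDerivAt (attractionRate c k) (c / k + 3 * c * s) s :=
  ((((hasDerivAt_id' s).const_mul (c / k)).const_add (c / (6 * k ^ 2))).add
    ((hasDerivAt_pow 2 s).const_mul (3 / 2 * c))).congr_deriv (by ring)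

lemma euler_attractionRate (c k s : ℝ) :
    (s / 2 + 1 / (6 * k)) * deriv (attractionRate c k) s = attractionRate c k s := by
  rw [(hasDerivAt_attractionRate c k s).deriv, attractionRate]
  ring

theorem ftle_keig_stmt14_general (l c a00 k : ℝ) :
    ∀ x y : ℝ,
      (a00 + (l - c / (6 * k ^ 2)) * x + (l / 2 - c / (6 * k ^ 2)) * y
          - (c / (2 * k)) * (x + y) ^ 2 - (c / 2) * (x + y) ^ 3) *
        deriv (fun x' : ℝ =>
          c / (6 * k ^ 2) + (c / k) * (x' + y) + (3 / 2) * c * (x' + y) ^ 2) x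
      + ((l / (6 * k) - a00) - (l / 2 - c / (6 * k ^ 2)) * x + (c / (6 * k ^ 2)) * y
          + (c / (2 * k)) * (x + y) ^ 2 + (c / 2) * (x + y) ^ 3) *
        deriv (fun y' : ℝ =>
          c / (6 * k ^ 2) + (c / k) * (x + y') + (3 / 2) * c * (x + y') ^ 2) y
      = l * (c / (6 * k ^ 2) + (c / k) * (x + y) + (3 / 2) * c * (x + y) ^ 2) := by
  intro x y
  refine (mul_deriv_comp_add_const_add_mul_deriv_comp_const_add
    (attractionRate c k) _ _ x y).trans ?_
  calc _ = l * ((x + y) / 2 + 1 / (6 * k)) * deriv (attractionRate c k) (x + y) := by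
        congr 1; ring
    _ = l * attractionRate c k (x + y) := by rw [mul_assoc, euler_attractionRate]

/-- For the cubic planar vector field
`P = a₀₀ + (λ − c/(6k²))x + (λ/2 − c/(6k²))y − (c/(2k))(x+y)² − (c/2)(x+y)³`,
`Q = (λ/(6k) − a₀₀) − (λ/2 − c/(6k²))x + (c/(6k²))y + (c/(2k))(x+y)² + (c/2)(x+y)³`
(with `k ≠ 0`), the attraction rate
`s₁ = ∂Q/∂y = c/(6k²) + (c/k)(x+y) + (3/2)c(x+y)²` is a Koopman eigenfunction with
eigenvalue `λ`: `P ∂s₁/∂x + Q ∂s₁/∂y = λ s₁` everywhere. -/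
theorem ftle_keig_stmt14 (l c a00 k : ℝ) (hk : k ≠ 0) :
    ∀ x y : ℝ,
      (a00 + (l - c / (6 * k ^ 2)) * x + (l / 2 - c / (6 * k ^ 2)) * y
          - (c / (2 * k)) * (x + y) ^ 2 - (c / 2) * (x + y) ^ 3) *
        deriv (fun x' : ℝ =>
          c / (6 * k ^ 2) + (c / k) * (x' + y) + (3 / 2) * c * (x' + y) ^ 2) x
      + ((l / (6 * k) - a00) - (l / 2 - c / (6 * k ^ 2)) * x + (c / (6 * k ^ 2)) * y
          + (c / (2 * k)) * (x + y) ^ 2 + (c / 2) * (x + y) ^ 3) *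
        deriv (fun y' : ℝ =>
          c / (6 * k ^ 2) + (c / k) * (x + y') + (3 / 2) * c * (x + y') ^ 2) y
      = l * (c / (6 * k ^ 2) + (c / k) * (x + y) + (3 / 2) * c * (x + y) ^ 2) :=
  ftle_keig_stmt14_general l c a00 k
end

section
/- For the cubic planar vector field P(x,y) = −2 + x + (x + y)² − (1/3)(x + y)³, Q(x,y) = 1 + y − (x + y)² + (1/3)(x + y)³, the function g(x,y) = ((x + y) − 1)² satisfies P ∂g/∂x + Q ∂g/∂y = 2 g for all (x,y) ∈ ℝ²; that is, the attraction rate field s₁(x,y) = ((x+y) − 1)² of this vector field is a Koopman eigenfunction with eigenvalue λ = 2. -/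
/-! Since `g` depends on `x + y` only, both of its partial derivatives equal `2 ((x + y) − 1)`,
and the cubic terms cancel in `P + Q = (x + y) − 1`. -/

/-- For the cubic planar vector field `P = −2 + x + (x+y)² − (1/3)(x+y)³`,
`Q = 1 + y − (x+y)² + (1/3)(x+y)³`, the attraction rate field
`g(x,y) = ((x+y) − 1)²` satisfies `P ∂g/∂x + Q ∂g/∂y = 2g` everywhere, i.e., it is a
Koopman eigenfunction with eigenvalue `2`. -/
theorem ftle_keig_stmt15 :
    ∀ x y : ℝ,
      (-2 + x + (x + y) ^ 2 - (1 / 3) * (x + y) ^ 3) *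
          deriv (fun x' : ℝ => ((x' + y) - 1) ^ 2) x
        + (1 + y - (x + y) ^ 2 + (1 / 3) * (x + y) ^ 3) *
          deriv (fun y' : ℝ => ((x + y') - 1) ^ 2) y
      = 2 * ((x + y) - 1) ^ 2 := by
  intro x y
  have hx : deriv (fun x' : ℝ => ((x' + y) - 1) ^ 2) x = 2 * ((x + y) - 1) := by
    convert ((((hasDerivAt_id' x).add_const y).sub_const 1).fun_pow 2).deriv using 1
    norm_num
  have hy : deriv (fun y' : ℝ => ((x + y') - 1) ^ 2) y = 2 * ((x + y) - 1) := by
    convert ((((hasDerivAt_id' y).const_add x).sub_const 1).fun_pow 2).deriv using 1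
    norm_num
  rw [hx, hy]
  ring
end
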